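/- arXiv:1911.02729 — 2 statements merged into one kernel-verified Lean document; each statement's English description precedes it below -/
import Mathlib

section
/- Let $m: (0,\infty) \to \mathbb{R}$ be differentiable and $f: [0,\infty) \to \mathbb{R}$ be twice differentiable. Suppose $m'(r) + \frac{1}{n-1} m(r)^2 + \frac{1}{2} - f''(r) \le 0$ for all $r \in (0, t]$, and $r^2 m(r) \to 0$ and $r^2 m'(r)$ is integrable near $0$ (with $m(r) - \tfrac{n-1}{r}$ bounded near $0$). Then $m(t) - f'(t) \le \frac{n-1}{t} - \frac{t}{6} - \frac{2}{t^2}\int_0^t s f'(s)\, ds$ for all $t > 0$. -/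
/-!
Write `c = n - 1` and multiply the Riccati inequality by `r²`. Since
`2 r m - c ≤ (r m)² / c` (this is `(r m - c)² ≥ 0`, the term discarded in the paper), the function
`φ(r) = r² m(r) - r² f'(r) + 2 ∫₀ʳ s f'(s) ds + r³/6 - c r` has `φ' ≤ 0` on `(0, t)`.
It extends continuously by `φ(0) = 0` because `r² m(r) → 0`, so `φ(t) ≤ 0`,
which is the claim after dividing by `t²`.
-/

open MeasureTheory Set Filter Topology

lemma two_mul_sub_le_sq_div {c : ℝ} (hc : 0 < c) (y : ℝ) : 2 * y - c ≤ y ^ 2 / c := by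
  rw [le_div_iff₀ hc]
  nlinarith [sq_nonneg (y - c)]

namespace RiccatiComparison

noncomputable def phi (c : ℝ) (m f' : ℝ → ℝ) (r : ℝ) : ℝ :=
  r ^ 2 * m r - r ^ 2 * f' r + 2 * (∫ s in (0 : ℝ)..r, s * f' s) + r ^ 3 / 6 - c * r

variable {c t : ℝ} {m m' f' f'' : ℝ → ℝ}

@[simp]
lemma phi_zero : phi c m f' 0 = 0 := by
  simp [phi]

lemma hasDerivAt_phi (hf'c : ContinuousOn f' (Icc 0 t)) {x : ℝ} (hx : x ∈ Ioo 0 t)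
    (hm : HasDerivAt m (m' x) x) (hf' : HasDerivAt f' (f'' x) x) :
    HasDerivAt (phi c m f')
      (x ^ 2 * m' x + 2 * x * m x - x ^ 2 * f'' x + x ^ 2 / 2 - c) x := by
  have hg : ContinuousOn (fun s => s * f' s) (Icc 0 t) := continuousOn_id.mul hf'c
  have hprim : HasDerivAt (fun r => ∫ s in (0 : ℝ)..r, s * f' s) (x * f' x) x := by
    refine intervalIntegral.integral_hasDerivAt_right ?_ ?_ ?_
    · exact (hg.mono (Icc_subset_Icc le_rfl hx.2.le)).intervalIntegrable_of_Icc hx.1.le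
    · exact (hg.mono Ioo_subset_Icc_self).stronglyMeasurableAtFilter isOpen_Ioo x hx
    · exact hg.continuousAt (Icc_mem_nhds hx.1 hx.2)
  have h : HasDerivAt (fun r => r ^ 2 * m r - r ^ 2 * f' r + 2 * (∫ s in (0 : ℝ)..r, s * f' s)
      + r ^ 3 / 6 - c * r) _ x :=
    (((((hasDerivAt_pow 2 x).mul hm).sub ((hasDerivAt_pow 2 x).mul hf')).add
      (hprim.const_mul 2)).add ((hasDerivAt_pow 3 x).div_const 6)).sub
      ((hasDerivAt_id x).const_mul c)
  unfold phi
  convert h using 1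
  push_cast
  ring

lemma continuousOn_phi (ht : 0 ≤ t) (hm : ∀ x ∈ Ioc 0 t, ContinuousAt m x)
    (hf'c : ContinuousOn f' (Icc 0 t))
    (hlim : Tendsto (fun r => r ^ 2 * m r) (𝓝[>] 0) (𝓝 0)) :
    ContinuousOn (phi c m f') (Icc 0 t) := by
  have hmr : ContinuousOn (fun r => r ^ 2 * m r) (Icc 0 t) := by
    intro x hx
    rcases hx.1.eq_or_lt with rfl | hx0
    · have : ContinuousWithinAt (fun r => r ^ 2 * m r) (Ioi 0) 0 := by
        simpa [ContinuousWithinAt] using hlim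
      exact (continuousWithinAt_Ioi_iff_Ici.1 this).mono Icc_subset_Ici_self
    · exact ((continuous_pow 2).continuousAt.mul (hm x ⟨hx0, hx.2⟩)).continuousWithinAt
  have hprim : ContinuousOn (fun r => ∫ s in (0 : ℝ)..r, s * f' s) (Icc 0 t) := by
    have hg : ContinuousOn (fun s => s * f' s) (uIcc 0 t) := by
      rw [uIcc_of_le ht]
      exact continuousOn_id.mul hf'c
    simpa only [uIcc_of_le ht] using
      intervalIntegral.continuousOn_primitive_interval hg.integrableOn_uIcc
  have hpow : ∀ k : ℕ, ContinuousOn (fun r : ℝ => r ^ k) (Icc 0 t) :=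
    fun k => (continuous_pow k).continuousOn
  exact (((hmr.sub ((hpow 2).mul hf'c)).add (continuousOn_const.mul hprim)).add
    ((hpow 3).div_const 6)).sub (continuousOn_const.mul continuousOn_id)

lemma phi_deriv_nonpos (hc : 0 < c) {x : ℝ}
    (hriccati : m' x + m x ^ 2 / c + 1 / 2 - f'' x ≤ 0) :
    x ^ 2 * m' x + 2 * x * m x - x ^ 2 * f'' x + x ^ 2 / 2 - c ≤ 0 := by
  have hsq := two_mul_sub_le_sq_div hc (x * m x)
  have hmul := mul_nonpos_of_nonneg_of_nonpos (sq_nonneg x) hriccati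
  calc x ^ 2 * m' x + 2 * x * m x - x ^ 2 * f'' x + x ^ 2 / 2 - c
      ≤ x ^ 2 * m' x + (x * m x) ^ 2 / c - x ^ 2 * f'' x + x ^ 2 / 2 := by linarith
    _ = x ^ 2 * (m' x + m x ^ 2 / c + 1 / 2 - f'' x) := by ring
    _ ≤ 0 := hmul

lemma phi_nonpos (hc : 0 < c) (ht : 0 ≤ t)
    (hm : ∀ x ∈ Ioc 0 t, HasDerivAt m (m' x) x)
    (hf' : ∀ x ∈ Icc 0 t, HasDerivAt f' (f'' x) x)
    (hriccati : ∀ x ∈ Ioc 0 t, m' x + m x ^ 2 / c + 1 / 2 - f'' x ≤ 0)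
    (hlim : Tendsto (fun r => r ^ 2 * m r) (𝓝[>] 0) (𝓝 0)) :
    phi c m f' t ≤ 0 := by
  have hf'c : ContinuousOn f' (Icc 0 t) := fun x hx => (hf' x hx).continuousAt.continuousWithinAt
  have hanti : AntitoneOn (phi c m f') (Icc 0 t) := by
    refine antitoneOn_of_hasDerivWithinAt_nonpos (convex_Icc 0 t)
      (f' := fun x => x ^ 2 * m' x + 2 * x * m x - x ^ 2 * f'' x + x ^ 2 / 2 - c)
      (continuousOn_phi ht (fun x hx => (hm x hx).continuousAt) hf'c hlim) (fun x hx => ?_)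
      (fun x hx => ?_)
    all_goals rw [interior_Icc] at hx
    · exact (hasDerivAt_phi hf'c hx (hm x (Ioo_subset_Ioc_self hx))
        (hf' x (Ioo_subset_Icc_self hx))).hasDerivWithinAt
    · exact phi_deriv_nonpos hc (hriccati x (Ioo_subset_Ioc_self hx))
  simpa using hanti (left_mem_Icc.2 ht) (right_mem_Icc.2 ht) ht

end RiccatiComparison

theorem stmt3_general (n : ℕ) (hn : 2 ≤ n) (t : ℝ) (ht : 0 < t)
    (m m' f' f'' : ℝ → ℝ)
    (hm : ∀ r ∈ Set.Ioc (0:ℝ) t, HasDerivAt m (m' r) r)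
    (hf' : ∀ r ∈ Set.Icc (0:ℝ) t, HasDerivAt f' (f'' r) r)
    (hriccati : ∀ r ∈ Set.Ioc (0:ℝ) t,
      m' r + (m r) ^ 2 / ((n : ℝ) - 1) + 1/2 - f'' r ≤ 0)
    (hlim : Filter.Tendsto (fun r => r ^ 2 * m r)
      (nhdsWithin 0 (Set.Ioi 0)) (nhds 0)) :
    m t - f' t ≤ ((n : ℝ) - 1) / t - t / 6 - 2 / t ^ 2 * ∫ s in (0:ℝ)..t, s * f' s := by
  have hc : (0 : ℝ) < (n : ℝ) - 1 := by
    have : (2 : ℝ) ≤ n := by exact_mod_cast hn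
    linarith
  have hphi := RiccatiComparison.phi_nonpos hc ht.le hm hf' hriccati hlim
  unfold RiccatiComparison.phi at hphi
  have hrhs : t ^ 2 * (((n : ℝ) - 1) / t - t / 6 - 2 / t ^ 2 * ∫ s in (0:ℝ)..t, s * f' s)
      = ((n : ℝ) - 1) * t - t ^ 3 / 6 - 2 * ∫ s in (0:ℝ)..t, s * f' s := by
    field_simp
  refine le_of_mul_le_mul_left ?_ (pow_pos ht 2)
  linarith

/-- ODE comparison step in the weighted Laplacian comparison on a shrinker:
from the Riccati inequality `m' + m²/(n-1) + 1/2 - f'' ≤ 0` on `(0,t]`,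
with boundary behaviour of `m` near `0`, one gets
`m(t) - f'(t) ≤ (n-1)/t - t/6 - (2/t²)∫₀ᵗ s f'(s) ds`. -/
theorem stmt3 (n : ℕ) (hn : 2 ≤ n) (t : ℝ) (ht : 0 < t)
    (m m' f f' f'' : ℝ → ℝ)
    (hm : ∀ r ∈ Set.Ioc (0:ℝ) t, HasDerivAt m (m' r) r)
    (hf : ∀ r ∈ Set.Icc (0:ℝ) t, HasDerivAt f (f' r) r)
    (hf' : ∀ r ∈ Set.Icc (0:ℝ) t, HasDerivAt f' (f'' r) r)
    (hriccati : ∀ r ∈ Set.Ioc (0:ℝ) t,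
      m' r + (m r) ^ 2 / ((n : ℝ) - 1) + 1/2 - f'' r ≤ 0)
    (hlim : Filter.Tendsto (fun r => r ^ 2 * m r)
      (nhdsWithin 0 (Set.Ioi 0)) (nhds 0))
    (hint : IntervalIntegrable (fun r => r ^ 2 * m' r) volume 0 t)
    (hbdd : ∃ Cb, ∀ r ∈ Set.Ioc (0:ℝ) t, |m r - ((n : ℝ) - 1) / r| ≤ Cb)
    (hint2 : IntervalIntegrable (fun s => s * f' s) volume 0 t) :
    m t - f' t ≤ ((n : ℝ) - 1) / t - t / 6 - 2 / t ^ 2 * ∫ s in (0:ℝ)..t, s * f' s :=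
  stmt3_general n hn t ht m m' f' f'' hm hf' hriccati hlim
end

section
/- Let $n \ge 2$ be an integer, $b \ge 0$, and $t \ge b + 4n - \tfrac{4}{3}$ where $b = 2\sqrt{f(p)}$. Suppose a function $F: [0,\infty) \to \mathbb{R}$ satisfies $\frac{1}{4}\big[(s - b - 4n + \tfrac{4}{3})_+\big]^2 \le F(s) \le \frac{1}{4}(s + b)^2$ for all $s \ge 0$. Then $\frac{n-1}{t} - \frac{t}{6} - \frac{2}{t}F(t) + \frac{2}{t^2}\int_0^t F(s)\, ds \le -\frac{t}{2} + \tfrac{3}{2}b + 4n - \tfrac{4}{3}$. -/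
open MeasureTheory

/-!
After substituting the lower bound for `F t` and the upper bound for `F` under the integral
(`∫₀ᵗ (s + b)²/4 = ((t + b)³ - b³)/12`), the left-hand side becomes exactly
`-t/2 + 3b/2 + c + (n - 1 - c (2b + c)/2)/t` with `c = 4n - 4/3`, and the last term is
nonpositive as soon as `c² ≥ 2(n - 1)`.
-/

theorem intervalIntegral.integral_add_const_sq (a t b : ℝ) :
    ∫ s in a..t, (s + b) ^ 2 = ((t + b) ^ 3 - (a + b) ^ 3) / 3 := by
  rw [intervalIntegral.integral_comp_add_right (fun s => s ^ 2), integral_pow]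
  ring

theorem intervalIntegral.integral_le_of_le_add_const_sq {F : ℝ → ℝ} {b t : ℝ} (ht : 0 ≤ t)
    (hint : IntervalIntegrable F volume 0 t) (hup : ∀ s ≥ (0:ℝ), F s ≤ (s + b) ^ 2 / 4) :
    ∫ s in (0:ℝ)..t, F s ≤ ((t + b) ^ 3 - b ^ 3) / 12 := by
  have hcont : Continuous fun s : ℝ => (s + b) ^ 2 / 4 := by fun_prop
  calc ∫ s in (0:ℝ)..t, F s ≤ ∫ s in (0:ℝ)..t, (s + b) ^ 2 / 4 :=
        intervalIntegral.integral_mono_on ht hint (hcont.intervalIntegrable 0 t)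
          fun s hs => hup s hs.1
    _ = ((t + b) ^ 3 - b ^ 3) / 12 := by
        rw [intervalIntegral.integral_div, intervalIntegral.integral_add_const_sq]
        ring

theorem comparison_expr_eq (m b c t : ℝ) (ht : t ≠ 0) :
    m / t - t / 6 - 2 / t * ((t - b - c) ^ 2 / 4) + 2 / t ^ 2 * (((t + b) ^ 3 - b ^ 3) / 12) =
      -t / 2 + 3 / 2 * b + c + (m - c * (2 * b + c) / 2) / t := by
  field_simp
  ring

theorem comparison_expr_le {m b c t Ft I : ℝ} (ht : 0 < t) (hm : 2 * m ≤ c * (2 * b + c))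
    (hFt : (t - b - c) ^ 2 / 4 ≤ Ft) (hI : I ≤ ((t + b) ^ 3 - b ^ 3) / 12) :
    m / t - t / 6 - 2 / t * Ft + 2 / t ^ 2 * I ≤ -t / 2 + 3 / 2 * b + c := by
  have hrem : (m - c * (2 * b + c) / 2) / t ≤ 0 :=
    div_nonpos_of_nonpos_of_nonneg (by linarith) ht.le
  calc m / t - t / 6 - 2 / t * Ft + 2 / t ^ 2 * I
      ≤ m / t - t / 6 - 2 / t * ((t - b - c) ^ 2 / 4)
          + 2 / t ^ 2 * (((t + b) ^ 3 - b ^ 3) / 12) := by gcongr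
    _ = -t / 2 + 3 / 2 * b + c + (m - c * (2 * b + c) / 2) / t := comparison_expr_eq m b c t ht.ne'
    _ ≤ -t / 2 + 3 / 2 * b + c := by linarith

/-- Analytic estimate in the weighted Laplacian comparison on shrinkers: if
`¼[(s - b - 4n + 4/3)₊]² ≤ F(s) ≤ ¼(s+b)²` for all `s ≥ 0` and
`t ≥ b + 4n - 4/3`, then
`(n-1)/t - t/6 - (2/t)F(t) + (2/t²)∫₀ᵗ F ≤ -t/2 + (3/2)b + 4n - 4/3`. -/
theorem stmt4 (n : ℕ) (hn : 2 ≤ n) (b : ℝ) (hb : 0 ≤ b) (t : ℝ)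
    (ht : b + 4 * n - 4/3 ≤ t)
    (F : ℝ → ℝ) (hint : IntervalIntegrable F volume 0 t)
    (hlow : ∀ s ≥ (0:ℝ), (max (s - b - 4 * n + 4/3) 0) ^ 2 / 4 ≤ F s)
    (hup : ∀ s ≥ (0:ℝ), F s ≤ (s + b) ^ 2 / 4) :
    ((n : ℝ) - 1) / t - t / 6 - 2 / t * F t + 2 / t ^ 2 * ∫ s in (0:ℝ)..t, F s ≤
      -t / 2 + 3/2 * b + 4 * n - 4/3 := by
  have hn' : (2:ℝ) ≤ n := by exact_mod_cast hn
  have ht0 : 0 < t := by linarith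
  have hm : 2 * ((n : ℝ) - 1) ≤ (4 * n - 4/3) * (2 * b + (4 * n - 4/3)) := by
    nlinarith [mul_nonneg hb (by linarith : (0:ℝ) ≤ 4 * n - 4/3)]
  have hFt : (t - b - (4 * n - 4/3)) ^ 2 / 4 ≤ F t := by
    have h := hlow t ht0.le
    rwa [max_eq_left (by linarith), show t - b - 4 * n + 4/3 = t - b - (4 * n - 4/3) by ring] at h
  have hI := intervalIntegral.integral_le_of_le_add_const_sq ht0.le hint hup
  have key := comparison_expr_le ht0 hm hFt hI
  linarith
end
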